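/- For every k ∈ ℕ₀ and every x ∈ ℂ with |x| = 1, Σ_{j=1}^n |P_k^{(j)}(x)|² = n^{k+1}; consequently |P_k^{(j)}(x)| ≤ n^{(k+1)/2} for every j with 1 ≤ j ≤ n. -/

import Mathlib

open Polynomial

/-- The vector of polynomials `(P_k^{(1)}, …, P_k^{(n)})` defined by
`P_0^{(j)}(x) = x` and `v_{k+1}(x) = A^{(n,k)}(x) v_k(x)`, where `A^{(n,k)}(x)` has
`(j,l)` entry `ω^{jl} x^{l·n^k}` with `ω = exp(2πi/n)` (indices `0`-based). -/
noncomputable def Fvec (n : ℕ) : ℕ → Fin n → Polynomial ℂ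
  | 0 => fun _ => Polynomial.X
  | k + 1 => fun j => ∑ l : Fin n,
      Polynomial.C (Complex.exp (2 * Real.pi * Complex.I / n) ^ ((j : ℕ) * (l : ℕ)))
        * Polynomial.X ^ ((l : ℕ) * n ^ k) * Fvec n k l

/-!
For `|x| = 1` the matrix `A^{(n,k)}(x)` is the DFT matrix `(ω^{jl})` times the unitary diagonal
matrix `diag(x^{l n^k})`. The columns of the DFT matrix are orthogonal of squared length `n`
(Parseval), so each step of the recurrence multiplies `∑ⱼ |P^{(j)}(x)|²` by exactly `n`, starting
from `n |x|² = n`.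
-/

open ComplexConjugate

theorem sum_fin_pow_eq_ite {K : Type*} [Field K] [DecidableEq K] {θ : K} {n : ℕ} (hθ : θ ^ n = 1) :
    ∑ j : Fin n, θ ^ (j : ℕ) = if θ = 1 then (n : K) else 0 := by
  split_ifs with h
  · simp [h]
  · rw [Fin.sum_univ_eq_sum_range (θ ^ ·), geom_sum_eq h, hθ, sub_self, zero_div]

namespace IsPrimitiveRoot

variable {ω : ℂ} {n : ℕ}

theorem sum_pow_mul_conj_pow (hω : IsPrimitiveRoot ω n) (a b : Fin n) :
    ∑ j : Fin n, ω ^ ((j : ℕ) * a) * conj (ω ^ ((j : ℕ) * b)) =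
      if a = b then (n : ℂ) else 0 := by
  have hn : n ≠ 0 := a.pos.ne'
  have hnorm : ‖ω‖ = 1 := hω.norm'_eq_one hn
  have hterm (j : ℕ) : ω ^ (j * (a : ℕ)) * conj (ω ^ (j * (b : ℕ))) =
      (ω ^ (a : ℕ) * conj (ω ^ (b : ℕ))) ^ j := by
    rw [mul_pow, ← pow_mul, ← map_pow, ← pow_mul, mul_comm j, mul_comm j]
  have hθn : (ω ^ (a : ℕ) * conj (ω ^ (b : ℕ))) ^ n = 1 := by
    rw [mul_pow, ← map_pow, ← pow_mul, ← pow_mul, mul_comm _ n, mul_comm _ n, pow_mul, pow_mul,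
      hω.pow_eq_one, one_pow, one_pow, map_one, mul_one]
  have hθ : ω ^ (a : ℕ) * conj (ω ^ (b : ℕ)) = 1 ↔ a = b := by
    rw [← Complex.inv_eq_conj (by simp [hnorm]), mul_inv_eq_one₀ (pow_ne_zero _ (hω.ne_zero hn))]
    exact ⟨fun h => Fin.ext (hω.pow_inj a.isLt b.isLt h), fun h => h ▸ rfl⟩
  simp only [hterm, sum_fin_pow_eq_ite hθn, hθ]

theorem sum_norm_sq_sum_pow_mul (hω : IsPrimitiveRoot ω n) (c : Fin n → ℂ) :
    ∑ j : Fin n, ‖∑ l : Fin n, ω ^ ((j : ℕ) * l) * c l‖ ^ 2 = n * ∑ l : Fin n, ‖c l‖ ^ 2 := by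
  apply Complex.ofReal_injective
  push_cast
  simp only [← Complex.mul_conj']
  calc ∑ j : Fin n, (∑ l : Fin n, ω ^ ((j : ℕ) * l) * c l) *
        conj (∑ m : Fin n, ω ^ ((j : ℕ) * m) * c m)
      = ∑ l : Fin n, ∑ m : Fin n,
          (∑ j : Fin n, ω ^ ((j : ℕ) * l) * conj (ω ^ ((j : ℕ) * m))) * (c l * conj (c m)) := by
        simp only [map_sum, map_mul, Finset.sum_mul_sum]
        simp only [Finset.sum_mul]
        refine Finset.sum_comm.trans (Finset.sum_congr rfl fun l _ => ?_)
        refine Finset.sum_comm.trans (Finset.sum_congr rfl fun m _ => ?_)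
        exact Finset.sum_congr rfl fun j _ => by ring
    _ = n * ∑ l : Fin n, c l * conj (c l) := by
        simp only [hω.sum_pow_mul_conj_pow, ite_mul, zero_mul, Finset.sum_ite_eq, Finset.mem_univ,
          if_true, Finset.mul_sum]

end IsPrimitiveRoot

theorem eval_Fvec_succ (n k : ℕ) (j : Fin n) (x : ℂ) :
    (Fvec n (k + 1) j).eval x = ∑ l : Fin n,
      Complex.exp (2 * Real.pi * Complex.I / n) ^ ((j : ℕ) * l) *
        (x ^ ((l : ℕ) * n ^ k) * (Fvec n k l).eval x) := by
  simp only [Fvec, eval_finsetSum, eval_mul, eval_C, eval_pow, eval_X, mul_assoc]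

theorem sum_norm_sq_eval_Fvec (n : ℕ) [NeZero n] (k : ℕ) {x : ℂ} (hx : ‖x‖ = 1) :
    ∑ j : Fin n, ‖(Fvec n k j).eval x‖ ^ 2 = (n : ℝ) ^ (k + 1) := by
  induction k with
  | zero => simp [Fvec, hx]
  | succ k ih =>
    simp only [eval_Fvec_succ,
      (Complex.isPrimitiveRoot_exp n (NeZero.ne n)).sum_norm_sq_sum_pow_mul, norm_mul, norm_pow,
      hx, one_pow, one_mul, ih, pow_succ' (n : ℝ) (k + 1)]

theorem le_rpow_div_two_of_sq_le {a b : ℝ} (hb : 0 ≤ b) (m : ℕ) (h : a ^ 2 ≤ b ^ m) :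
    a ≤ b ^ ((m : ℝ) / 2) := by
  rw [div_eq_mul_one_div, Real.rpow_mul hb, Real.rpow_natCast, ← Real.sqrt_eq_rpow]
  exact Real.le_sqrt_of_sq_le h

/-- For `|x| = 1`, `∑_j |P_k^{(j)}(x)|² = n^{k+1}`, and hence
`|P_k^{(j)}(x)| ≤ n^{(k+1)/2}` for every `j`. -/
theorem stmt16 (n : ℕ) (hn : 2 ≤ n) (k : ℕ) (x : ℂ) (hx : ‖x‖ = 1) :
    (∑ j : Fin n, ‖(Fvec n k j).eval x‖ ^ 2 = (n : ℝ) ^ (k + 1)) ∧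
    (∀ j : Fin n, ‖(Fvec n k j).eval x‖ ≤ (n : ℝ) ^ (((k : ℝ) + 1) / 2)) := by
  have : NeZero n := ⟨by omega⟩
  have hsum := sum_norm_sq_eval_Fvec n k hx
  refine ⟨hsum, fun j => ?_⟩
  have hj : ‖(Fvec n k j).eval x‖ ^ 2 ≤ (n : ℝ) ^ (k + 1) :=
    hsum ▸ Finset.single_le_sum (f := fun i => ‖(Fvec n k i).eval x‖ ^ 2)
      (fun i _ => by positivity) (Finset.mem_univ j)
  exact_mod_cast le_rpow_div_two_of_sq_le n.cast_nonneg (k + 1) hj
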